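/- In a reverse differential restriction category with joins, the reverse differential operator preserves joins: for any pairwise compatible family {f_i}, R[⋁_i f_i] = ⋁_i R[f_i]. -/
import Mathlib


open CategoryTheory

universe v u

/-- A restriction category: a category with a restriction operator `rst`
satisfying the four Cockett–Lack axioms R1–R4. -/
class RestrictionCat (C : Type u) [Category.{v} C] where
  rst : ∀ {A B : C}, (A ⟶ B) → (A ⟶ A)
  rst_comp : ∀ {A B : C} (f : A ⟶ B), rst f ≫ f = f
  rst_comm : ∀ {A B B' : C} (f : A ⟶ B) (g : A ⟶ B'), rst f ≫ rst g = rst g ≫ rst f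
  rst_rst : ∀ {A B B' : C} (f : A ⟶ B) (g : A ⟶ B'), rst (rst g ≫ f) = rst g ≫ rst f
  rst_slide : ∀ {A B D : C} (f : A ⟶ B) (g : B ⟶ D), f ≫ rst g = rst (f ≫ g) ≫ f

open RestrictionCat

/-- The canonical partial order on hom-sets: `f ≤ g` iff `rst f ≫ g = f`. -/
def rle {C : Type u} [Category.{v} C] [RestrictionCat C] {A B : C} (f g : A ⟶ B) : Prop :=
  rst f ≫ g = f

/-- A Cartesian left additive restriction category: a restriction category with
(lax) restriction products and a left additive structure on hom-sets. -/
class CLARC (C : Type u) [Category.{v} C] extends RestrictionCat C where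
  prod : C → C → C
  pair : ∀ {A B B' : C}, (A ⟶ B) → (A ⟶ B') → (A ⟶ prod B B')
  p0 : ∀ {B B' : C}, prod B B' ⟶ B
  p1 : ∀ {B B' : C}, prod B B' ⟶ B'
  pair_p0 : ∀ {A B B' : C} (f : A ⟶ B) (g : A ⟶ B'), pair f g ≫ p0 = rst g ≫ f
  pair_p1 : ∀ {A B B' : C} (f : A ⟶ B) (g : A ⟶ B'), pair f g ≫ p1 = rst f ≫ g
  pair_eta : ∀ {A B B' : C} (h : A ⟶ prod B B'), pair (h ≫ p0) (h ≫ p1) = h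
  comp_pair : ∀ {X A B B' : C} (x : X ⟶ A) (f : A ⟶ B) (g : A ⟶ B'),
    x ≫ pair f g = pair (x ≫ f) (x ≫ g)
  add : ∀ {A B : C}, (A ⟶ B) → (A ⟶ B) → (A ⟶ B)
  zero : ∀ {A B : C}, A ⟶ B
  add_assoc : ∀ {A B : C} (f g h : A ⟶ B), add (add f g) h = add f (add g h)
  add_comm : ∀ {A B : C} (f g : A ⟶ B), add f g = add g f
  add_zero : ∀ {A B : C} (f : A ⟶ B), add f zero = f
  comp_add : ∀ {X A B : C} (x : X ⟶ A) (f g : A ⟶ B),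
    x ≫ add f g = add (x ≫ f) (x ≫ g)
  zero_comp_le : ∀ {A B D : C} (f : B ⟶ D),
    rst ((zero : A ⟶ B) ≫ f) ≫ (zero : A ⟶ D) = (zero : A ⟶ B) ≫ f
  zero_total : ∀ {A B : C}, rst (zero : A ⟶ B) = 𝟙 A
  add_p0 : ∀ {A B B' : C} (f g : A ⟶ prod B B'),
    add f g ≫ p0 = add (f ≫ p0) (g ≫ p0)
  add_p1 : ∀ {A B B' : C} (f g : A ⟶ prod B B'),
    add f g ≫ p1 = add (f ≫ p1) (g ≫ p1)
  zero_p0 : ∀ {A B B' : C}, (zero : A ⟶ prod B B') ≫ p0 = (zero : A ⟶ B)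
  zero_p1 : ∀ {A B B' : C}, (zero : A ⟶ prod B B') ≫ p1 = (zero : A ⟶ B')

open CLARC

/-- A reverse differential restriction category: a Cartesian left additive
restriction category equipped with a reverse differential operator `Rd`
satisfying axioms RD.1–RD.9. -/
class RDRC (C : Type u) [Category.{v} C] extends CLARC C where
  Rd : ∀ {A B : C}, (A ⟶ B) → (prod A B ⟶ A)
  RD1a : ∀ {A B : C} (f g : A ⟶ B), Rd (add f g) = add (Rd f) (Rd g)
  RD1b : ∀ {A B : C}, Rd (zero : A ⟶ B) = zero
  RD2a : ∀ {X A B : C} (a : X ⟶ A) (b c : X ⟶ B) (f : A ⟶ B),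
    pair a (add b c) ≫ Rd f = add (pair a b ≫ Rd f) (pair a c ≫ Rd f)
  RD2b : ∀ {X A B : C} (a : X ⟶ A) (f : A ⟶ B),
    pair a (zero : X ⟶ B) ≫ Rd f = rst (a ≫ f) ≫ zero
  RD3a : ∀ {A B : C}, Rd (p0 : prod A B ⟶ A) = p1 ≫ pair (𝟙 A) (zero : A ⟶ B)
  RD3b : ∀ {A B : C}, Rd (p1 : prod A B ⟶ B) = p1 ≫ pair (zero : B ⟶ A) (𝟙 B)
  RD4 : ∀ {A B B' : C} (f : A ⟶ B) (g : A ⟶ B'),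
    Rd (pair f g) = add (pair p0 (p1 ≫ p0) ≫ Rd f) (pair p0 (p1 ≫ p1) ≫ Rd g)
  RD5 : ∀ {A B D : C} (f : A ⟶ B) (g : B ⟶ D),
    Rd (f ≫ g) = pair p0 (pair (p0 ≫ f) p1 ≫ Rd g) ≫ Rd f
  RD6 : ∀ {A B : C} (f : A ⟶ B),
    pair (pair p0 (p1 ≫ p0)) (pair (p0 ≫ (zero : A ⟶ A)) (p1 ≫ p1)) ≫
      pair (p0 ≫ pair (p0 ≫ pair (𝟙 A) (zero : A ⟶ B)) p1) p1 ≫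
      Rd (Rd (Rd f)) ≫ p1
    = pair p0 (p1 ≫ p1) ≫ Rd f
  RD7 : ∀ {A B : C} (f : A ⟶ B),
    pair (pair p0 (zero : prod (prod A A) (prod A A) ⟶ B)) p1 ≫
      Rd (Rd (pair (pair p0 (zero : prod A A ⟶ B)) p1 ≫ Rd (Rd f) ≫ p1)) ≫ p1
    = pair (pair (p0 ≫ p0) (p1 ≫ p0)) (pair (p0 ≫ p1) (p1 ≫ p1)) ≫
      pair (pair p0 (zero : prod (prod A A) (prod A A) ⟶ B)) p1 ≫
      Rd (Rd (pair (pair p0 (zero : prod A A ⟶ B)) p1 ≫ Rd (Rd f) ≫ p1)) ≫ p1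
  RD8 : ∀ {A B : C} (f : A ⟶ B), rst (Rd f) = pair (p0 ≫ rst f) p1
  RD9 : ∀ {A B : C} (f : A ⟶ B), Rd (rst f) = pair (p0 ≫ rst f) p1 ≫ p1

open RDRC

/-- Pairwise compatibility of a family of parallel maps. -/
def Compat {C : Type u} [Category.{v} C] [RestrictionCat C] {A B : C}
    (S : Set (A ⟶ B)) : Prop :=
  ∀ f ∈ S, ∀ g ∈ S, rst f ≫ g = rst g ≫ f

/-- A reverse differential join restriction category: an RDRC in which every
pairwise compatible family of parallel maps has a join, compatible with
composition. -/
class JoinRDRC (C : Type u) [Category.{v} C] extends RDRC C where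
  join : ∀ {A B : C}, Set (A ⟶ B) → (A ⟶ B)
  join_le : ∀ {A B : C} (S : Set (A ⟶ B)),
    (∀ f ∈ S, ∀ g ∈ S, rst f ≫ g = rst g ≫ f) →
    ∀ f ∈ S, rst f ≫ join S = f
  join_min : ∀ {A B : C} (S : Set (A ⟶ B)) (g : A ⟶ B),
    (∀ f ∈ S, ∀ g ∈ S, rst f ≫ g = rst g ≫ f) →
    (∀ f ∈ S, rst f ≫ g = f) → rst (join S) ≫ g = join S
  comp_join : ∀ {X A B : C} (x : X ⟶ A) (S : Set (A ⟶ B)),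
    (∀ f ∈ S, ∀ g ∈ S, rst f ≫ g = rst g ≫ f) →
    x ≫ join S = join ((x ≫ ·) '' S)
  join_comp : ∀ {A B Y : C} (S : Set (A ⟶ B)) (y : B ⟶ Y),
    (∀ f ∈ S, ∀ g ∈ S, rst f ≫ g = rst g ≫ f) →
    join S ≫ y = join ((· ≫ y) '' S)

open JoinRDRC

section Aux

variable {C : Type u} [Category.{v} C] [JoinRDRC C]

lemma rst_one' (A : C) : rst (𝟙 A) = 𝟙 A := by
  have h := rst_comp (𝟙 A)
  simpa using h

lemma rst_idem' {A B : C} (f : A ⟶ B) : rst (rst f) = rst f := by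
  have h := rst_rst (𝟙 A) f
  simpa [rst_one'] using h

lemma rst_self' {A B : C} (f : A ⟶ B) : rst f ≫ rst f = rst f := by
  have h := rst_rst f f
  rw [rst_comp] at h
  exact h.symm

lemma comp_rst_le' {A B D : C} (f : A ⟶ B) (g : B ⟶ D) :
    rst f ≫ rst (f ≫ g) = rst (f ≫ g) := by
  have h := rst_rst (f ≫ g) f
  rw [← Category.assoc, rst_comp] at h
  exact h.symm

lemma rle_comp' {A B D : C} (f : A ⟶ B) (g : B ⟶ D) :
    rst (f ≫ g) ≫ rst f = rst (f ≫ g) := by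
  rw [rst_comm, comp_rst_le']

lemma rst_comp_rst' {A B D : C} (f : A ⟶ B) (g : B ⟶ D) :
    rst (f ≫ rst g) = rst (f ≫ g) := by
  rw [rst_slide f g, rst_rst, rle_comp']

lemma pair_proj_id' (A B : C) : pair (p0 : prod A B ⟶ A) p1 = 𝟙 (prod A B) := by
  have h := pair_eta (𝟙 (prod A B))
  simpa using h

lemma rst_p0' (A B : C) : rst (p0 : prod A B ⟶ A) = 𝟙 (prod A B) := by
  have h1 : rst (p0 : prod A B ⟶ A) ≫ p1 = p1 := by
    have h := pair_p1 (p0 : prod A B ⟶ A) p1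
    rw [pair_proj_id', Category.id_comp] at h
    exact h.symm
  have h := pair_eta (rst (p0 : prod A B ⟶ A))
  rw [rst_comp, h1, pair_proj_id'] at h
  exact h.symm

lemma rst_p1' (A B : C) : rst (p1 : prod A B ⟶ B) = 𝟙 (prod A B) := by
  have h0 : rst (p1 : prod A B ⟶ B) ≫ p0 = p0 := by
    have h := pair_p0 (p0 : prod A B ⟶ A) p1
    rw [pair_proj_id', Category.id_comp] at h
    exact h.symm
  have h := pair_eta (rst (p1 : prod A B ⟶ B))
  rw [rst_comp, h0, pair_proj_id'] at h
  exact h.symm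

lemma rst_comp_p0' {X A B : C} (h : X ⟶ prod A B) : rst (h ≫ p0) = rst h := by
  rw [← rst_comp_rst', rst_p0', Category.comp_id]

lemma rst_pair' {X A B : C} (a : X ⟶ A) (b : X ⟶ B) :
    rst (pair a b) = rst b ≫ rst a := by
  rw [← rst_comp_p0' (pair a b), pair_p0, rst_rst]

lemma rst_comp_pair' {X A B : C} (a : X ⟶ A) (b : X ⟶ B) :
    rst a ≫ pair a b = pair a b := by
  calc rst a ≫ pair a b
      = rst a ≫ rst (pair a b) ≫ pair a b := by rw [rst_comp]
    _ = rst a ≫ (rst b ≫ rst a) ≫ pair a b := by rw [rst_pair']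
    _ = (rst a ≫ rst b) ≫ rst a ≫ pair a b := by simp only [Category.assoc]
    _ = (rst b ≫ rst a) ≫ rst a ≫ pair a b := by rw [rst_comm]
    _ = rst b ≫ (rst a ≫ rst a) ≫ pair a b := by simp only [Category.assoc]
    _ = rst b ≫ rst a ≫ pair a b := by rw [rst_self']
    _ = (rst b ≫ rst a) ≫ pair a b := by rw [Category.assoc]
    _ = rst (pair a b) ≫ pair a b := by rw [rst_pair']
    _ = pair a b := rst_comp _

lemma pair_rst_snd' {X A B : C} (a : X ⟶ A) (b : X ⟶ B) :
    pair a (rst a ≫ b) = pair a b := by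
  have h := comp_pair (rst a) a b
  rw [rst_comp] at h
  rw [← h, rst_comp_pair']

lemma pair_absorb' {A B Y : C} (g : A ⟶ Y) :
    pair ((p0 : prod A B ⟶ A) ≫ rst g) p1 = rst ((p0 : prod A B ⟶ A) ≫ g) := by
  have h := comp_pair (rst ((p0 : prod A B ⟶ A) ≫ g)) (p0 : prod A B ⟶ A) p1
  rw [pair_proj_id', Category.comp_id, ← rst_slide] at h
  rw [← rst_comp_rst' (p0 : prod A B ⟶ A) g] at h
  rw [pair_rst_snd', rst_comp_rst'] at h
  exact h.symm

lemma rst_Rd' {A B : C} (f : A ⟶ B) :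
    rst (Rd f) = rst ((p0 : prod A B ⟶ A) ≫ f) := by
  rw [RD8, pair_absorb']

/-- Key lemma: `Rd (rst g ≫ h) = rst (Rd g) ≫ Rd h`. -/
lemma Rd_rst_comp' {A B : C} (g h : A ⟶ B) :
    Rd (rst g ≫ h) = rst (Rd g) ≫ Rd h := by
  rw [RD5, RD9, pair_absorb', pair_absorb']
  set X : prod A B ⟶ A := rst ((p0 : prod A B ⟶ A) ≫ g) ≫ Rd h with hX
  have hp1 : pair (p0 : prod A B ⟶ A) X ≫ p1 = X := by
    rw [pair_p1, rst_p0', Category.id_comp]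
  have hp0 : pair (p0 : prod A B ⟶ A) X ≫ p0 = rst X ≫ p0 := pair_p0 _ _
  calc pair (p0 : prod A B ⟶ A) X ≫ rst ((p0 : prod A A ⟶ A) ≫ g) ≫ p1
      = (pair (p0 : prod A B ⟶ A) X ≫ rst ((p0 : prod A A ⟶ A) ≫ g)) ≫ p1 := by
        rw [Category.assoc]
    _ = (rst (pair (p0 : prod A B ⟶ A) X ≫ (p0 : prod A A ⟶ A) ≫ g) ≫
          pair (p0 : prod A B ⟶ A) X) ≫ p1 := by rw [rst_slide]
    _ = rst (pair (p0 : prod A B ⟶ A) X ≫ (p0 : prod A A ⟶ A) ≫ g) ≫ X := by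
        rw [Category.assoc, hp1]
    _ = rst ((pair (p0 : prod A B ⟶ A) X ≫ (p0 : prod A A ⟶ A)) ≫ g) ≫ X := by
        rw [Category.assoc]
    _ = rst ((rst X ≫ p0) ≫ g) ≫ X := by rw [hp0]
    _ = rst (rst X ≫ p0 ≫ g) ≫ X := by rw [Category.assoc]
    _ = (rst X ≫ rst (p0 ≫ g)) ≫ X := by rw [rst_rst]
    _ = (rst (p0 ≫ g) ≫ rst X) ≫ X := by rw [rst_comm]
    _ = rst (p0 ≫ g) ≫ rst X ≫ X := by rw [Category.assoc]
    _ = rst (p0 ≫ g) ≫ X := by rw [rst_comp]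
    _ = rst (p0 ≫ g) ≫ rst (p0 ≫ g) ≫ Rd h := by rw [hX]
    _ = (rst (p0 ≫ g) ≫ rst (p0 ≫ g)) ≫ Rd h := by rw [Category.assoc]
    _ = rst (p0 ≫ g) ≫ Rd h := by rw [rst_self']
    _ = rst (Rd g) ≫ Rd h := by rw [rst_Rd']

/-- Restriction of a join is the join of the restrictions. -/
lemma rst_join' {A B : C} (S : Set (A ⟶ B))
    (hS : ∀ f ∈ S, ∀ g ∈ S, rst f ≫ g = rst g ≫ f) :
    rst (join S) = join ((fun g => rst g) '' S) := by
  set Sr : Set (A ⟶ A) := (fun g => rst g) '' S with hSr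
  have hSrc : ∀ x ∈ Sr, ∀ y ∈ Sr, rst x ≫ y = rst y ≫ x := by
    rintro x ⟨a, _, rfl⟩ y ⟨b, _, rfl⟩
    rw [rst_idem', rst_idem', rst_comm]
  set E : A ⟶ A := join Sr with hE
  -- each rst a ≤ E, and rst a ≤ rst (join S)
  have hle : ∀ a ∈ S, rst a ≫ E = rst a := by
    intro a ha
    have := join_le Sr hSrc (rst a) ⟨a, ha, rfl⟩
    rwa [rst_idem'] at this
  -- rst E = E
  have hEr : rst E ≫ rst E = E := by
    refine join_min Sr (rst E) hSrc ?_
    rintro x ⟨a, ha, rfl⟩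
    dsimp only
    rw [rst_idem']
    have h1 : rst (rst a ≫ E) = rst a ≫ rst E := rst_rst _ _
    rw [hle a ha] at h1
    rw [← h1, rst_idem']
  have hErE : rst E = E := by
    conv_rhs => rw [← hEr]
    rw [rst_self']
  -- E ≤ rst (join S)
  have hEleF : E ≫ rst (join S) = E := by
    have h := join_min Sr (rst (join S)) hSrc ?_
    · rwa [hErE] at h
    · rintro x ⟨a, ha, rfl⟩
      dsimp only
      rw [rst_idem']
      have h1 : rst (rst a ≫ join S) = rst a ≫ rst (join S) := rst_rst _ _
      rw [join_le S hS a ha] at h1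
      exact h1.symm
  -- E ≫ join S = join S
  have himg : (· ≫ join S) '' Sr = S := by
    ext x
    constructor
    · rintro ⟨y, ⟨a, ha, rfl⟩, rfl⟩
      dsimp only
      simpa [join_le S hS a ha] using ha
    · intro hx
      exact ⟨rst x, ⟨x, hx, rfl⟩, join_le S hS x hx⟩
  have hEF : E ≫ join S = join S := by
    rw [join_comp Sr (join S) hSrc, himg]
  -- rst (join S) ≤ E
  have hFleE : rst (join S) ≫ E = rst (join S) := by
    have h := rle_comp' E (join S)
    rw [hEF, hErE] at h
    exact h
  -- conclude
  calc rst (join S) = rst (join S) ≫ E := hFleE.symm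
    _ = rst (join S) ≫ rst E := by rw [hErE]
    _ = rst E ≫ rst (join S) := by rw [rst_comm]
    _ = E ≫ rst (join S) := by rw [hErE]
    _ = E := hEleF

end Aux

/-- In a reverse differential restriction category with joins,
the reverse differential operator preserves joins: for any pairwise compatible
family `{f_i}`, `R[⋁_i f_i] = ⋁_i R[f_i]`. -/
theorem Rd_join {C : Type u} [Category.{v} C] [JoinRDRC C]
    {A B : C} {ι : Type*} (f : ι → (A ⟶ B))
    (hcompat : ∀ i j, rst (f i) ≫ f j = rst (f j) ≫ f i) :
    Rd (join (Set.range f)) = join (Set.range fun i => Rd (f i)) := by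
  set S : Set (A ⟶ B) := Set.range f with hS
  set T : Set (prod A B ⟶ A) := Set.range fun i => Rd (f i) with hT
  have hSc : ∀ g ∈ S, ∀ h ∈ S, rst g ≫ h = rst h ≫ g := by
    rintro g ⟨i, rfl⟩ h ⟨j, rfl⟩
    exact hcompat i j
  set F : A ⟶ B := join S with hF
  -- compatibility of the reverse derivatives
  have hTc : ∀ x ∈ T, ∀ y ∈ T, rst x ≫ y = rst y ≫ x := by
    rintro x ⟨i, rfl⟩ y ⟨j, rfl⟩
    dsimp only
    rw [← Rd_rst_comp', ← Rd_rst_comp', hcompat i j]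
  -- each Rd (f i) ≤ Rd F
  have h1 : ∀ x ∈ T, rst x ≫ Rd F = x := by
    rintro x ⟨i, rfl⟩
    dsimp only
    rw [← Rd_rst_comp', join_le S hSc (f i) ⟨i, rfl⟩]
  -- join T ≤ Rd F
  have h2 : rst (join T) ≫ Rd F = join T := join_min T (Rd F) hTc h1
  -- rst (Rd F) = rst (join T)
  have hSc' : ∀ g ∈ ((p0 : prod A B ⟶ A) ≫ ·) '' S,
      ∀ h ∈ ((p0 : prod A B ⟶ A) ≫ ·) '' S, rst g ≫ h = rst h ≫ g := by
    rintro g ⟨a, ha, rfl⟩ h ⟨b, hb, rfl⟩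
    dsimp only
    calc rst (p0 ≫ a) ≫ p0 ≫ b = (rst (p0 ≫ a) ≫ p0) ≫ b := by rw [Category.assoc]
      _ = (p0 ≫ rst a) ≫ b := by rw [← rst_slide]
      _ = p0 ≫ rst a ≫ b := by rw [Category.assoc]
      _ = p0 ≫ rst b ≫ a := by rw [hSc a ha b hb]
      _ = (p0 ≫ rst b) ≫ a := by rw [Category.assoc]
      _ = (rst (p0 ≫ b) ≫ p0) ≫ a := by rw [rst_slide]
      _ = rst (p0 ≫ b) ≫ p0 ≫ a := by rw [Category.assoc]
  have himg : (fun g => rst g) '' (((p0 : prod A B ⟶ A) ≫ ·) '' S) =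
      (fun g => rst g) '' T := by
    ext x
    constructor
    · rintro ⟨y, ⟨a, ⟨i, rfl⟩, rfl⟩, rfl⟩
      refine ⟨Rd (f i), ⟨i, rfl⟩, ?_⟩
      dsimp only
      rw [rst_Rd']
    · rintro ⟨y, ⟨i, rfl⟩, rfl⟩
      refine ⟨p0 ≫ f i, ⟨f i, ⟨i, rfl⟩, rfl⟩, ?_⟩
      dsimp only
      rw [rst_Rd']
  have h3 : rst (Rd F) = rst (join T) := by
    calc rst (Rd F) = rst ((p0 : prod A B ⟶ A) ≫ F) := rst_Rd' F
      _ = rst (join (((p0 : prod A B ⟶ A) ≫ ·) '' S)) := by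
          rw [comp_join (p0 : prod A B ⟶ A) S hSc]
      _ = join ((fun g => rst g) '' (((p0 : prod A B ⟶ A) ≫ ·) '' S)) :=
          rst_join' _ hSc'
      _ = join ((fun g => rst g) '' T) := by rw [himg]
      _ = rst (join T) := (rst_join' T hTc).symm
  calc Rd F = rst (Rd F) ≫ Rd F := (rst_comp _).symm
    _ = rst (join T) ≫ Rd F := by rw [h3]
    _ = join T := h2
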